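/- arXiv:1807.01093 — 6 statements merged into one kernel-verified Lean document; each statement's English description precedes it below -/
import Mathlib

section
/- Let λ_1, …, λ_M be independent, nonnegative, integrable real random variables with means λ̄_i = E[λ_i], total mean S = Σ_{i=1}^M λ̄_i > 0, and weights ρ_i = λ̄_i / S. Let C ≥ 0 and define the average fluid loss L(α) = E((Σ_{i=1}^M (λ_i − ρ_i α)^+ − (C − α))^+). Then α = 0 minimizes L over [0, C]; that is, for every α with 0 ≤ α ≤ C, L(0) ≤ L(α). -/
open MeasureTheory ProbabilityTheory

/-- in the bufferless two-tier fog model, `α = 0` (all capacity at the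
deep cloudlet) minimizes the average fluid loss `L` over `[0, C]`. -/
theorem zero_minimizes_average_fluid_loss
    {Ω : Type*} [MeasurableSpace Ω] (μ : Measure Ω) [IsProbabilityMeasure μ]
    (M : ℕ) (lam : Fin M → Ω → ℝ)
    (hmeas : ∀ i, Measurable (lam i))
    (hindep : iIndepFun lam μ)
    (hnonneg : ∀ i ω, 0 ≤ lam i ω)
    (hint : ∀ i, Integrable (lam i) μ)
    (lamBar : Fin M → ℝ) (hbar : ∀ i, lamBar i = ∫ ω, lam i ω ∂μ)
    (S : ℝ) (hS : S = ∑ i, lamBar i) (hSpos : 0 < S)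
    (ρ : Fin M → ℝ) (hρ : ∀ i, ρ i = lamBar i / S)
    (C : ℝ) (hC : 0 ≤ C)
    (L : ℝ → ℝ)
    (hL : ∀ α, L α = ∫ ω, max (∑ i, max (lam i ω - ρ i * α) 0 - (C - α)) 0 ∂μ) :
    ∀ α, 0 ≤ α → α ≤ C → L 0 ≤ L α := by
  intro α hα0 hαC
  have hρnn : ∀ i, 0 ≤ ρ i := by
    intro i
    rw [hρ i, hbar i]
    exact div_nonneg (integral_nonneg (hnonneg i)) hSpos.le
  have hρsum : ∑ i, ρ i = 1 := by
    simp only [hρ]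
    rw [← Finset.sum_div, ← hS, div_self hSpos.ne']
  rw [hL 0, hL α]
  set f : Ω → ℝ := fun ω => max (∑ i, max (lam i ω - ρ i * 0) 0 - (C - 0)) 0 with hf
  set g : Ω → ℝ := fun ω => max (∑ i, max (lam i ω - ρ i * α) 0 - (C - α)) 0 with hg
  have hfg : ∀ ω, f ω ≤ g ω := by
    intro ω
    apply max_le_max _ le_rfl
    have h1 : ∑ i, max (lam i ω - ρ i * 0) 0 = ∑ i, lam i ω := by
      refine Finset.sum_congr rfl fun i _ => ?_
      rw [mul_zero, sub_zero]
      exact max_eq_left (hnonneg i ω)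
    have h2 : (∑ i, lam i ω) - α ≤ ∑ i, max (lam i ω - ρ i * α) 0 := by
      calc (∑ i, lam i ω) - α = ∑ i, (lam i ω - ρ i * α) := by
            rw [Finset.sum_sub_distrib, ← Finset.sum_mul, hρsum, one_mul]
        _ ≤ ∑ i, max (lam i ω - ρ i * α) 0 :=
            Finset.sum_le_sum fun i _ => le_max_left _ _
    rw [h1]
    linarith
  have hgbound : ∀ ω, ‖g ω‖ ≤ ∑ i, lam i ω + |C - α| := by
    intro ω
    have hB : ∑ i, max (lam i ω - ρ i * α) 0 ≤ ∑ i, lam i ω := by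
      refine Finset.sum_le_sum fun i _ => ?_
      exact max_le (by nlinarith [hρnn i, hnonneg i ω]) (hnonneg i ω)
    have hA : 0 ≤ ∑ i, lam i ω := Finset.sum_nonneg fun i _ => hnonneg i ω
    have : ‖g ω‖ = g ω := Real.norm_of_nonneg (le_max_right _ _)
    rw [this]
    have h3 : -(C - α) ≤ |C - α| := neg_le_abs _
    exact max_le (by linarith) (by positivity)
  have hgmeas : AEStronglyMeasurable g μ := by
    apply Measurable.aestronglyMeasurable
    apply Measurable.max _ measurable_const
    apply Measurable.sub _ measurable_const
    exact Finset.measurable_sum _ fun i _ =>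
      ((hmeas i).sub measurable_const).max measurable_const
  have hbound_int : Integrable (fun ω => ∑ i, lam i ω + |C - α|) μ :=
    (integrable_finset_sum _ fun i _ => hint i).add (integrable_const _)
  have hg_int : Integrable g μ :=
    hbound_int.mono' hgmeas (Filter.Eventually.of_forall hgbound)
  exact integral_mono_of_nonneg (Filter.Eventually.of_forall fun ω => le_max_right _ _)
    hg_int (Filter.Eventually.of_forall hfg)
end

section
/- Let λ_1, …, λ_M be independent, nonnegative, integrable real random variables with means λ̄_i = E[λ_i], total mean S = Σ_{i=1}^M λ̄_i > 0, and weights ρ_i = λ̄_i / S. Let C ≥ 0 and define L(α) = E((Σ_{i=1}^M (λ_i − ρ_i α)^+ − (C − α))^+). Then L is monotone non-decreasing on [0, C]: for all 0 ≤ α_h ≤ α_k ≤ C, L(α_h) ≤ L(α_k). -/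
open MeasureTheory ProbabilityTheory

/-- in the bufferless two-tier fog model, the average fluid loss `L`
is monotone non-decreasing on `[0, C]`. -/
theorem average_fluid_loss_monotone
    {Ω : Type*} [MeasurableSpace Ω] (μ : Measure Ω) [IsProbabilityMeasure μ]
    (M : ℕ) (lam : Fin M → Ω → ℝ)
    (hmeas : ∀ i, Measurable (lam i))
    (hindep : iIndepFun lam μ)
    (hnonneg : ∀ i ω, 0 ≤ lam i ω)
    (hint : ∀ i, Integrable (lam i) μ)
    (lamBar : Fin M → ℝ) (hbar : ∀ i, lamBar i = ∫ ω, lam i ω ∂μ)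
    (S : ℝ) (hS : S = ∑ i, lamBar i) (hSpos : 0 < S)
    (ρ : Fin M → ℝ) (hρ : ∀ i, ρ i = lamBar i / S)
    (C : ℝ) (hC : 0 ≤ C)
    (L : ℝ → ℝ)
    (hL : ∀ α, L α = ∫ ω, max (∑ i, max (lam i ω - ρ i * α) 0 - (C - α)) 0 ∂μ) :
    ∀ αh αk, 0 ≤ αh → αh ≤ αk → αk ≤ C → L αh ≤ L αk := by
  intro αh αk hh hhk hkC
  have hlamBar_nonneg : ∀ i, 0 ≤ lamBar i := fun i => by
    rw [hbar]; exact integral_nonneg (fun ω => hnonneg i ω)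
  have hρ_nonneg : ∀ i, 0 ≤ ρ i := fun i => by
    rw [hρ]; exact div_nonneg (hlamBar_nonneg i) hSpos.le
  have hρ_sum : ∑ i, ρ i = 1 := by
    simp only [hρ]; rw [← Finset.sum_div, ← hS, div_self hSpos.ne']
  set g : ℝ → Ω → ℝ := fun α ω => max (∑ i, max (lam i ω - ρ i * α) 0 - (C - α)) 0 with hg
  have hmeasg : ∀ α, Measurable (g α) := fun α => by
    apply Measurable.max _ measurable_const
    apply Measurable.sub _ measurable_const
    exact Finset.measurable_sum _ fun i _ => ((hmeas i).sub measurable_const).max measurable_const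
  have hint_sum : Integrable (fun ω => ∑ i, lam i ω) μ := integrable_finset_sum _ fun i _ => hint i
  have hbound : ∀ α, 0 ≤ α → α ≤ C → ∀ ω, g α ω ≤ ∑ i, lam i ω := by
    intro α hα hαC ω
    apply max_le _ (Finset.sum_nonneg fun i _ => hnonneg i ω)
    have hterm : ∀ i, max (lam i ω - ρ i * α) 0 ≤ lam i ω := fun i =>
      max_le (by nlinarith [hρ_nonneg i, hnonneg i ω]) (hnonneg i ω)
    have h1 : ∑ i, max (lam i ω - ρ i * α) 0 ≤ ∑ i, lam i ω :=
      Finset.sum_le_sum fun i _ => hterm i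
    linarith
  have hintg : ∀ α, 0 ≤ α → α ≤ C → Integrable (g α) μ := fun α hα hαC =>
    hint_sum.mono' ((hmeasg α).aestronglyMeasurable)
      (Filter.Eventually.of_forall fun ω => by
        rw [Real.norm_eq_abs, abs_of_nonneg (le_max_right _ _)]
        exact hbound α hα hαC ω)
  have hmono : ∀ ω, g αh ω ≤ g αk ω := by
    intro ω
    apply max_le _ (le_max_right _ _)
    refine le_trans ?_ (le_max_left _ _)
    have key : ∀ i, max (lam i ω - ρ i * αh) 0 ≤ max (lam i ω - ρ i * αk) 0 + ρ i * (αk - αh) := by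
      intro i
      have := hρ_nonneg i
      rcases le_or_gt (lam i ω - ρ i * αh) 0 with h | h
      · rw [max_eq_right h]
        have h2 := le_max_right (lam i ω - ρ i * αk) (0:ℝ)
        nlinarith
      · rw [max_eq_left h.le]
        have h2 := le_max_left (lam i ω - ρ i * αk) (0:ℝ)
        nlinarith
    have hsum := Finset.sum_le_sum fun i (_ : i ∈ Finset.univ) => key i
    rw [Finset.sum_add_distrib, ← Finset.sum_mul, hρ_sum, one_mul] at hsum
    linarith
  rw [hL, hL]
  exact integral_mono (hintg αh hh (hhk.trans hkC)) (hintg αk (hh.trans hhk) hkC) hmono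
end

section
/- Let X and Y be integrable real random variables with E[X] ≤ E[Y], and suppose there exists a crossing point c ∈ ℝ such that P(X ≤ x) ≤ P(Y ≤ x) for all x < c and P(X ≤ x) ≥ P(Y ≤ x) for all x ≥ c (the once-crossing condition). Then X precedes Y in stop-loss order: for every retention d ∈ ℝ, E((X − d)^+) ≤ E((Y − d)^+). -/
open MeasureTheory Set

/-- Comparison of expectations of positive parts via tail measures. -/
lemma stop_loss_aux {Ω : Type*} [MeasurableSpace Ω] (μ : Measure Ω) [IsProbabilityMeasure μ]
    (g h : Ω → ℝ) (hgi : Integrable g μ) (hhi : Integrable h μ)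
    (hcmp : ∀ t : ℝ, 0 < t → μ {ω | t ≤ g ω} ≤ μ {ω | t ≤ h ω}) :
    ∫ ω, max (g ω) 0 ∂μ ≤ ∫ ω, max (h ω) 0 ∂μ := by
  have hgi' := hgi.pos_part
  have hhi' := hhi.pos_part
  have hg0 : 0 ≤ᵐ[μ] fun ω => max (g ω) 0 := Filter.Eventually.of_forall fun ω => le_max_right _ _
  have hh0 : 0 ≤ᵐ[μ] fun ω => max (h ω) 0 := Filter.Eventually.of_forall fun ω => le_max_right _ _
  rw [integral_eq_lintegral_of_nonneg_ae hg0 hgi'.aestronglyMeasurable,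
      integral_eq_lintegral_of_nonneg_ae hh0 hhi'.aestronglyMeasurable]
  apply ENNReal.toReal_mono hhi'.lintegral_lt_top.ne
  rw [lintegral_eq_lintegral_meas_le μ hg0 hgi'.aemeasurable,
      lintegral_eq_lintegral_meas_le μ hh0 hhi'.aemeasurable]
  refine lintegral_mono_ae ?_
  filter_upwards [ae_restrict_mem measurableSet_Ioi] with t ht
  have e1 : {ω | t ≤ max (g ω) 0} = {ω | t ≤ g ω} := by
    ext ω; simp only [mem_setOf_eq, le_max_iff]
    exact ⟨fun hc => hc.resolve_right (by intro h'; exact absurd (lt_of_lt_of_le ht h') (lt_irrefl 0)), Or.inl⟩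
  have e2 : {ω | t ≤ max (h ω) 0} = {ω | t ≤ h ω} := by
    ext ω; simp only [mem_setOf_eq, le_max_iff]
    exact ⟨fun hc => hc.resolve_right (by intro h'; exact absurd (lt_of_lt_of_le ht h') (lt_irrefl 0)), Or.inl⟩
  rw [e1, e2]
  exact hcmp t ht

/-- the dangerous order relation (once-crossing condition on the
distribution functions together with `E[X] ≤ E[Y]`) is a sufficient condition for
the stop-loss order. -/
theorem dangerous_order_implies_stop_loss_order
    {Ω : Type*} [MeasurableSpace Ω] (μ : Measure Ω) [IsProbabilityMeasure μ]
    (X Y : Ω → ℝ) (hXmeas : Measurable X) (hYmeas : Measurable Y)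
    (hXint : Integrable X μ) (hYint : Integrable Y μ)
    (hmean : ∫ ω, X ω ∂μ ≤ ∫ ω, Y ω ∂μ)
    (c : ℝ)
    (hbefore : ∀ x < c, (μ {ω | X ω ≤ x}).toReal ≤ (μ {ω | Y ω ≤ x}).toReal)
    (hafter : ∀ x, c ≤ x → (μ {ω | Y ω ≤ x}).toReal ≤ (μ {ω | X ω ≤ x}).toReal) :
    ∀ d : ℝ, ∫ ω, max (X ω - d) 0 ∂μ ≤ ∫ ω, max (Y ω - d) 0 ∂μ := by
  -- convert toReal hypotheses to ENNReal ones
  have hbefore' : ∀ x < c, μ {ω | X ω ≤ x} ≤ μ {ω | Y ω ≤ x} := fun x hx =>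
    (ENNReal.toReal_le_toReal (measure_ne_top μ _) (measure_ne_top μ _)).mp (hbefore x hx)
  have hafter' : ∀ x, c ≤ x → μ {ω | Y ω ≤ x} ≤ μ {ω | X ω ≤ x} := fun x hx =>
    (ENNReal.toReal_le_toReal (measure_ne_top μ _) (measure_ne_top μ _)).mp (hafter x hx)
  -- strict version: μ {Y < s} ≤ μ {X < s} for s > c
  have hlt : ∀ s : ℝ, c < s → μ {ω | Y ω < s} ≤ μ {ω | X ω < s} := by
    intro s hs
    have hunion : {ω | Y ω < s} = ⋃ n : ℕ, {ω | Y ω ≤ s - 1 / (n + 1)} := by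
      ext ω
      simp only [mem_setOf_eq, mem_iUnion]
      constructor
      · intro hω
        obtain ⟨n, hn⟩ := exists_nat_one_div_lt (sub_pos.mpr hω)
        exact ⟨n, by linarith⟩
      · rintro ⟨n, hn⟩
        have : (0:ℝ) < 1 / (n + 1) := by positivity
        linarith
    have hdir : Directed (· ⊆ ·) (fun n : ℕ => {ω | Y ω ≤ s - 1 / (n + 1)}) := by
      apply Monotone.directed_le
      intro m n hmn ω hω
      simp only [mem_setOf_eq] at *
      have h1 : (1:ℝ) / (n + 1) ≤ 1 / (m + 1) := by
        apply one_div_le_one_div_of_le (by positivity)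
        exact_mod_cast Nat.add_le_add_right hmn 1
      linarith
    rw [hunion, hdir.measure_iUnion]
    refine iSup_le fun n => ?_
    have hcu : c ≤ max c (s - 1 / (n + 1)) := le_max_left _ _
    have hus : max c (s - 1 / (n + 1)) < s := by
      have h0 : (0:ℝ) < 1 / (n + 1) := by positivity
      exact max_lt hs (by linarith)
    calc μ {ω | Y ω ≤ s - 1 / (n + 1)}
        ≤ μ {ω | Y ω ≤ max c (s - 1 / (n + 1))} := by
          apply measure_mono; intro ω hω
          simp only [mem_setOf_eq] at *
          exact le_trans hω (le_max_right _ _)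
      _ ≤ μ {ω | X ω ≤ max c (s - 1 / (n + 1))} := hafter' _ hcu
      _ ≤ μ {ω | X ω < s} := by
          apply measure_mono; intro ω hω
          simp only [mem_setOf_eq] at *
          exact lt_of_le_of_lt hω hus
  intro d
  rcases le_or_gt c d with hcd | hdc
  · -- d ≥ c : compare tails directly
    apply stop_loss_aux μ (fun ω => X ω - d) (fun ω => Y ω - d)
      (hXint.sub (integrable_const d)) (hYint.sub (integrable_const d))
    intro t ht
    have hset1 : {ω | t ≤ X ω - d} = {ω | X ω < d + t}ᶜ := by
      ext ω; simp only [mem_setOf_eq, mem_compl_iff, not_lt]; constructor <;> intro <;> linarith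
    have hset2 : {ω | t ≤ Y ω - d} = {ω | Y ω < d + t}ᶜ := by
      ext ω; simp only [mem_setOf_eq, mem_compl_iff, not_lt]; constructor <;> intro <;> linarith
    rw [hset1, hset2,
        measure_compl (measurableSet_lt hXmeas measurable_const) (measure_ne_top μ _),
        measure_compl (measurableSet_lt hYmeas measurable_const) (measure_ne_top μ _)]
    exact tsub_le_tsub_left (hlt (d + t) (by linarith)) _
  · -- d < c : use E(X-d)^+ = E[X] - d + E(d-X)^+
    have hid : ∀ (f : Ω → ℝ), (∀ ω, max (f ω - d) 0 = (f ω - d) + max (d - f ω) 0) := by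
      intro f ω
      rcases le_total d (f ω) with h' | h'
      · rw [max_eq_left (by linarith), max_eq_right (by linarith)]; ring
      · rw [max_eq_right (by linarith), max_eq_left (by linarith)]; ring
    have hXrw : ∫ ω, max (X ω - d) 0 ∂μ
        = (∫ ω, X ω ∂μ - d) + ∫ ω, max (d - X ω) 0 ∂μ := by
      rw [show (fun ω => max (X ω - d) 0) = fun ω => (X ω - d) + max (d - X ω) 0 from
        funext (hid X)]
      have h1 : Integrable (fun ω => X ω - d) μ := hXint.sub (integrable_const d)
      have h2 : Integrable (fun ω => max (d - X ω) 0) μ :=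
        ((integrable_const d).sub hXint).pos_part
      rw [integral_add h1 h2, integral_sub hXint (integrable_const d), integral_const,
        probReal_univ]
      simp
    have hYrw : ∫ ω, max (Y ω - d) 0 ∂μ
        = (∫ ω, Y ω ∂μ - d) + ∫ ω, max (d - Y ω) 0 ∂μ := by
      rw [show (fun ω => max (Y ω - d) 0) = fun ω => (Y ω - d) + max (d - Y ω) 0 from
        funext (hid Y)]
      have h1 : Integrable (fun ω => Y ω - d) μ := hYint.sub (integrable_const d)
      have h2 : Integrable (fun ω => max (d - Y ω) 0) μ :=
        ((integrable_const d).sub hYint).pos_part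
      rw [integral_add h1 h2, integral_sub hYint (integrable_const d), integral_const,
        probReal_univ]
      simp
    rw [hXrw, hYrw]
    apply add_le_add (by linarith)
    apply stop_loss_aux μ (fun ω => d - X ω) (fun ω => d - Y ω)
      ((integrable_const d).sub hXint) ((integrable_const d).sub hYint)
    intro t ht
    have hset1 : {ω | t ≤ d - X ω} = {ω | X ω ≤ d - t} := by
      ext ω; simp only [mem_setOf_eq]; constructor <;> intro <;> linarith
    have hset2 : {ω | t ≤ d - Y ω} = {ω | Y ω ≤ d - t} := by
      ext ω; simp only [mem_setOf_eq]; constructor <;> intro <;> linarith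
    rw [hset1, hset2]
    exact hbefore' (d - t) (by linarith)
end

section
/- Let X, Y, Z be integrable real random variables such that Z is independent of X and Z is independent of Y. If X precedes Y in stop-loss order (i.e., E((X − d)^+) ≤ E((Y − d)^+) for every d ∈ ℝ), then X + Z precedes Y + Z in stop-loss order: E((X + Z − d)^+) ≤ E((Y + Z − d)^+) for every d ∈ ℝ. -/
open MeasureTheory ProbabilityTheory

/-- stop-loss order is preserved by adding an independent random
variable: if `X ≤_sl Y`, `Z ⟂ X` and `Z ⟂ Y`, then `X + Z ≤_sl Y + Z`. -/
theorem stop_loss_order_add_indep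
    {Ω : Type*} [MeasurableSpace Ω] (μ : Measure Ω) [IsProbabilityMeasure μ]
    (X Y Z : Ω → ℝ)
    (hXmeas : Measurable X) (hYmeas : Measurable Y) (hZmeas : Measurable Z)
    (hXint : Integrable X μ) (hYint : Integrable Y μ) (hZint : Integrable Z μ)
    (hZX : IndepFun Z X μ) (hZY : IndepFun Z Y μ)
    (hsl : ∀ d : ℝ, ∫ ω, max (X ω - d) 0 ∂μ ≤ ∫ ω, max (Y ω - d) 0 ∂μ) :
    ∀ d : ℝ, ∫ ω, max (X ω + Z ω - d) 0 ∂μ ≤ ∫ ω, max (Y ω + Z ω - d) 0 ∂μ := by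
  intro d
  -- key: express each side as a lintegral over the product of the laws
  have hmapX : μ.map (fun ω => (X ω, Z ω)) = (μ.map X).prod (μ.map Z) :=
    (indepFun_iff_map_prod_eq_prod_map_map hXmeas.aemeasurable hZmeas.aemeasurable).mp hZX.symm
  have hmapY : μ.map (fun ω => (Y ω, Z ω)) = (μ.map Y).prod (μ.map Z) :=
    (indepFun_iff_map_prod_eq_prod_map_map hYmeas.aemeasurable hZmeas.aemeasurable).mp hZY.symm
  have hfmeas : Measurable (fun p : ℝ × ℝ => ENNReal.ofReal (max (p.1 + p.2 - d) 0)) := by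
    exact ((measurable_fst.add measurable_snd).sub measurable_const).max measurable_const
      |>.ennreal_ofReal
  have key : ∀ (W : Ω → ℝ), Measurable W →
      μ.map (fun ω => (W ω, Z ω)) = (μ.map W).prod (μ.map Z) →
      (∫⁻ ω, ENNReal.ofReal (max (W ω + Z ω - d) 0) ∂μ)
        = ∫⁻ z, ∫⁻ x, ENNReal.ofReal (max (x + z - d) 0) ∂(μ.map W) ∂(μ.map Z) := by
    intro W hW hmap
    rw [← lintegral_prod_symm' _ hfmeas, ← hmap]
    exact (lintegral_map (μ := μ)
      (f := fun p : ℝ × ℝ => ENNReal.ofReal (max (p.1 + p.2 - d) 0))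
      (g := fun ω => (W ω, Z ω)) hfmeas (hW.prodMk hZmeas)).symm
  have keyX := key X hXmeas hmapX
  have keyY := key Y hYmeas hmapY
  -- inner comparison
  have inner : ∀ z : ℝ,
      (∫⁻ x, ENNReal.ofReal (max (x + z - d) 0) ∂(μ.map X))
        ≤ ∫⁻ x, ENNReal.ofReal (max (x + z - d) 0) ∂(μ.map Y) := by
    intro z
    have hback : ∀ (W : Ω → ℝ), Measurable W → Integrable W μ →
        (∫⁻ x, ENNReal.ofReal (max (x + z - d) 0) ∂(μ.map W))
          = ENNReal.ofReal (∫ ω, max (W ω - (d - z)) 0 ∂μ) := by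
      intro W hW hWint
      rw [lintegral_map (by
        exact ((measurable_id.add measurable_const).sub measurable_const).max measurable_const
          |>.ennreal_ofReal) hW]
      have : (fun ω => ENNReal.ofReal (max (W ω + z - d) 0))
          = fun ω => ENNReal.ofReal (max (W ω - (d - z)) 0) := by
        funext ω; ring_nf
      rw [this, ← ofReal_integral_eq_lintegral_ofReal]
      · exact ((hWint.sub (integrable_const (d - z))).pos_part)
      · exact Filter.Eventually.of_forall fun ω => le_max_right _ _
    rw [hback X hXmeas hXint, hback Y hYmeas hYint]
    exact ENNReal.ofReal_le_ofReal (hsl (d - z))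
  have hlin : (∫⁻ ω, ENNReal.ofReal (max (X ω + Z ω - d) 0) ∂μ)
      ≤ ∫⁻ ω, ENNReal.ofReal (max (Y ω + Z ω - d) 0) ∂μ := by
    rw [keyX, keyY]
    exact lintegral_mono fun z => inner z
  -- convert back to real integrals
  have hconv : ∀ (W : Ω → ℝ), Measurable W → Integrable W μ →
      ENNReal.ofReal (∫ ω, max (W ω + Z ω - d) 0 ∂μ)
        = ∫⁻ ω, ENNReal.ofReal (max (W ω + Z ω - d) 0) ∂μ := by
    intro W hW hWint
    exact ofReal_integral_eq_lintegral_ofReal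
      (((hWint.add hZint).sub (integrable_const d)).pos_part)
      (Filter.Eventually.of_forall fun ω => le_max_right _ _)
  have := (hconv X hXmeas hXint).trans_le (hlin.trans_eq (hconv Y hYmeas hYint).symm)
  have hYnn : 0 ≤ ∫ ω, max (Y ω + Z ω - d) 0 ∂μ :=
    integral_nonneg fun ω => le_max_right _ _
  exact (ENNReal.ofReal_le_ofReal_iff hYnn).mp this
end

section
/- Let ρ > 0, D ≥ 0, S > 0, and let λ be a nonnegative integrable real random variable. Define the estimated average queue length e(α) = ρ α D for 0 ≤ α < S/(1+D), e(α) = ρ(S − α) for S/(1+D) ≤ α < S, and e(α) = 0 for α ≥ S. Then the function g(α) = E((λ + e(α) − ρ α (1 + D))^+) is non-increasing on [0, ∞): for all 0 ≤ α_1 ≤ α_2, g(α_2) ≤ g(α_1). -/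
open MeasureTheory

/-- with the piecewise-linear estimated average queue length `e`,
the estimated forwarded workload `g(α) = E((λ + e(α) − ρα(1+D))⁺)` is
non-increasing on `[0, ∞)`. -/
theorem estimated_forwarded_workload_antitone
    {Ω : Type*} [MeasurableSpace Ω] (μ : Measure Ω) [IsProbabilityMeasure μ]
    (ρ D S : ℝ) (hρ : 0 < ρ) (hD : 0 ≤ D) (hS : 0 < S)
    (lam : Ω → ℝ) (hmeas : Measurable lam) (hnonneg : ∀ ω, 0 ≤ lam ω)
    (hint : Integrable lam μ)
    (e : ℝ → ℝ)
    (he1 : ∀ α, 0 ≤ α → α < S / (1 + D) → e α = ρ * α * D)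
    (he2 : ∀ α, S / (1 + D) ≤ α → α < S → e α = ρ * (S - α))
    (he3 : ∀ α, S ≤ α → e α = 0)
    (g : ℝ → ℝ)
    (hg : ∀ α, g α = ∫ ω, max (lam ω + e α - ρ * α * (1 + D)) 0 ∂μ) :
    ∀ α₁ α₂, 0 ≤ α₁ → α₁ ≤ α₂ → g α₂ ≤ g α₁ := by
  have hD1 : (0:ℝ) < 1 + D := by linarith
  -- key: h α := e α - ρ α (1+D) is antitone on [0,∞)
  have key : ∀ a b : ℝ, 0 ≤ a → a ≤ b →
      e b - ρ * b * (1 + D) ≤ e a - ρ * a * (1 + D) := by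
    intro a b ha hab
    have hb : 0 ≤ b := le_trans ha hab
    have hval : ∀ x : ℝ, 0 ≤ x →
        e x - ρ * x * (1 + D) = if x < S / (1 + D) then -ρ * x
          else if x < S then ρ * S - ρ * x * (2 + D)
          else -ρ * x * (1 + D) := by
      intro x hx
      by_cases h1 : x < S / (1 + D)
      · rw [he1 x hx h1, if_pos h1]; ring
      · push_neg at h1
        by_cases h2 : x < S
        · rw [he2 x h1 h2, if_neg (not_lt.mpr h1), if_pos h2]; ring
        · push_neg at h2
          rw [he3 x h2, if_neg (not_lt.mpr h1), if_neg (not_lt.mpr h2)]; ring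
    rw [hval a ha, hval b hb]
    have hSd : S / (1 + D) * (1 + D) = S := div_mul_cancel₀ S (ne_of_gt hD1)
    by_cases ha1 : a < S / (1 + D)
    · by_cases hb1 : b < S / (1 + D)
      · simp only [ha1, hb1, if_true]; nlinarith
      · push_neg at hb1
        have hbS : S ≤ b * (1 + D) := by
          calc S = S / (1 + D) * (1 + D) := hSd.symm
          _ ≤ b * (1 + D) := by nlinarith
        have haS : a * (1 + D) < S := by
          calc a * (1 + D) < S / (1 + D) * (1 + D) := by nlinarith
          _ = S := hSd
        by_cases hb2 : b < S
        · simp only [ha1, if_true, not_lt.mpr hb1, if_false, hb2, if_true]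
          nlinarith
        · push_neg at hb2
          simp only [ha1, if_true, not_lt.mpr hb1, if_false, not_lt.mpr hb2]
          nlinarith [mul_nonneg (mul_nonneg hρ.le hb) hD, mul_nonneg hρ.le (sub_nonneg.mpr hab)]
    · push_neg at ha1
      have hab1 : ¬ b < S / (1 + D) := not_lt.mpr (le_trans ha1 hab)
      have haS : S ≤ a * (1 + D) := by
        calc S = S / (1 + D) * (1 + D) := hSd.symm
        _ ≤ a * (1 + D) := by nlinarith
      by_cases ha2 : a < S
      · by_cases hb2 : b < S
        · simp only [not_lt.mpr ha1, hab1, if_false, ha2, hb2, if_true]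
          nlinarith [mul_nonneg (mul_nonneg hρ.le (sub_nonneg.mpr hab)) (by linarith : (0:ℝ) ≤ 2 + D)]
        · push_neg at hb2
          simp only [not_lt.mpr ha1, hab1, if_false, ha2, if_true, not_lt.mpr hb2]
          nlinarith [mul_nonneg hρ.le (sub_nonneg.mpr ha2.le),
            mul_nonneg (mul_nonneg hρ.le (sub_nonneg.mpr hab)) hD1.le]
      · push_neg at ha2
        have hb2 : ¬ b < S := not_lt.mpr (le_trans ha2 hab)
        simp only [not_lt.mpr ha1, hab1, if_false, not_lt.mpr ha2, hb2]
        nlinarith [mul_nonneg (mul_nonneg hρ.le (sub_nonneg.mpr hab)) hD1.le]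
  intro a b ha hab
  rw [hg a, hg b]
  have hintf : ∀ c : ℝ, Integrable (fun ω => max (lam ω + c) 0) μ :=
    fun c => (hint.add (integrable_const c)).pos_part
  have h1 : Integrable (fun ω => max (lam ω + (e b - ρ * b * (1 + D))) 0) μ := hintf _
  have h2 : Integrable (fun ω => max (lam ω + (e a - ρ * a * (1 + D))) 0) μ := hintf _
  have heq : ∀ (c : ℝ) (ω : Ω), lam ω + c = lam ω + c := fun _ _ => rfl
  have : ∀ ω, max (lam ω + e b - ρ * b * (1 + D)) 0 ≤
      max (lam ω + e a - ρ * a * (1 + D)) 0 := by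
    intro ω
    apply max_le_max _ le_rfl
    have := key a b ha hab
    linarith
  refine integral_mono ?_ ?_ this
  · simpa [add_sub_assoc] using h1
  · simpa [add_sub_assoc] using h2
end

section
/- Let M ≥ 2 and let λ_1, …, λ_M be independent, nonnegative, integrable real random variables with means λ̄_i = E[λ_i], total mean S = Σ_{i=1}^M λ̄_i > 0, and weights ρ_i = λ̄_i / S. Assume each λ_i has full support on [0, ∞), i.e., P(λ_i < t) > 0 for every t > 0 and P(λ_i > t) > 0 for every t ∈ ℝ. Let C ≥ 0 and define L(α) = E((Σ_{i=1}^M (λ_i − ρ_i α)^+ − (C − α))^+). Then L is strictly increasing on [0, C]: for all 0 ≤ α_h < α_k ≤ C, L(α_h) < L(α_k). -/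
open MeasureTheory ProbabilityTheory

/-- under full-support hypotheses on the workloads, the average
fluid loss `L` of the bufferless two-tier fog model is strictly increasing on
`[0, C]`. -/
theorem average_fluid_loss_strictMono
    {Ω : Type*} [MeasurableSpace Ω] (μ : Measure Ω) [IsProbabilityMeasure μ]
    (M : ℕ) (hM : 2 ≤ M) (lam : Fin M → Ω → ℝ)
    (hmeas : ∀ i, Measurable (lam i))
    (hindep : iIndepFun lam μ)
    (hnonneg : ∀ i ω, 0 ≤ lam i ω)
    (hint : ∀ i, Integrable (lam i) μ)
    (lamBar : Fin M → ℝ) (hbar : ∀ i, lamBar i = ∫ ω, lam i ω ∂μ)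
    (S : ℝ) (hS : S = ∑ i, lamBar i) (hSpos : 0 < S)
    (ρ : Fin M → ℝ) (hρ : ∀ i, ρ i = lamBar i / S)
    (hsupp_lt : ∀ i, ∀ t : ℝ, 0 < t → 0 < μ {ω | lam i ω < t})
    (hsupp_gt : ∀ i, ∀ t : ℝ, 0 < μ {ω | t < lam i ω})
    (C : ℝ) (hC : 0 ≤ C)
    (L : ℝ → ℝ)
    (hL : ∀ α, L α = ∫ ω, max (∑ i, max (lam i ω - ρ i * α) 0 - (C - α)) 0 ∂μ) :
    ∀ αh αk, 0 ≤ αh → αh < αk → αk ≤ C → L αh < L αk := by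
  intro αh αk hαh hlt hαk
  -- each mean is positive
  have hbarpos : ∀ i, 0 < lamBar i := by
    intro i
    rw [hbar i]
    rw [integral_pos_iff_support_of_nonneg (fun ω => hnonneg i ω) (hint i)]
    refine lt_of_lt_of_le (hsupp_gt i 0) (measure_mono ?_)
    intro ω hω; exact ne_of_gt hω
  have hρpos : ∀ i, 0 < ρ i := fun i => by
    rw [hρ i]; exact div_pos (hbarpos i) hSpos
  have hρsum : ∑ i, ρ i = 1 := by
    simp only [hρ, ← Finset.sum_div, ← hS]
    exact div_self hSpos.ne'
  -- distinguished index j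
  have hMpos : 0 < M := by omega
  set j : Fin M := ⟨0, hMpos⟩ with hj
  have hj1 : (⟨1, by omega⟩ : Fin M) ∈ Finset.univ.erase j := by
    refine Finset.mem_erase.2 ⟨?_, Finset.mem_univ _⟩
    simp [hj, Fin.ext_iff]
  have hρj : ρ j < 1 := by
    have h1 : ∑ i ∈ Finset.univ.erase j, ρ i = 1 - ρ j := by
      rw [← hρsum]
      rw [Finset.sum_erase_eq_sub (Finset.mem_univ j)]
    have h2 : 0 < ∑ i ∈ Finset.univ.erase j, ρ i :=
      Finset.sum_pos (fun i _ => hρpos i) ⟨_, hj1⟩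
    linarith [h1 ▸ h2]
  set m : ℝ := (αh + αk) / 2 with hm
  have hmpos : 0 < m := by rw [hm]; linarith
  have hmlt : αh < m := by rw [hm]; linarith
  have hmlt' : m ≤ αk := by rw [hm]; linarith
  have hεpos : 0 < (αk - αh) * (1 - ρ j) / 2 := by
    apply div_pos (mul_pos (by linarith) (by linarith)) two_pos
  -- the event
  set s : Fin M → Set Ω := fun i =>
    if i = j then {ω | C + 1 < lam j ω} else {ω | lam i ω < ρ i * m} with hs
  set A : Set Ω := ⋂ i, s i with hA
  have hsmeas : ∀ i, MeasurableSet (s i) := by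
    intro i
    by_cases h : i = j
    · rw [hs]; simp only [if_pos h]
      exact measurableSet_lt measurable_const (hmeas j)
    · rw [hs]; simp only [if_neg h]
      exact measurableSet_lt (hmeas i) measurable_const
  have hAmeas : MeasurableSet A := MeasurableSet.iInter hsmeas
  -- positive probability
  have hApos : 0 < μ A := by
    have hcm : ∀ i, MeasurableSet[(inferInstance : MeasurableSpace ℝ).comap (lam i)] (s i) := by
      intro i
      by_cases h : i = j
      · refine ⟨Set.Ioi (C + 1), measurableSet_Ioi, ?_⟩
        rw [hs]; simp only [if_pos h]
        subst h; rfl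
      · refine ⟨Set.Iio (ρ i * m), measurableSet_Iio, ?_⟩
        rw [hs]; simp only [if_neg h]
        rfl
    have hprod := hindep.meas_iInter hcm
    rw [hA, hprod]
    rw [pos_iff_ne_zero, Finset.prod_ne_zero_iff]
    intro i _
    by_cases h : i = j
    · rw [hs]; simp only [if_pos h]
      exact (hsupp_gt j (C + 1)).ne'
    · rw [hs]; simp only [if_neg h]
      exact (hsupp_lt i (ρ i * m) (mul_pos (hρpos i) hmpos)).ne'
  -- integrand
  set f : ℝ → Ω → ℝ := fun α ω => max (∑ i, max (lam i ω - ρ i * α) 0 - (C - α)) 0 with hf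
  have hfint : ∀ α, 0 ≤ α → Integrable (f α) μ := by
    intro α hα
    have hg : Integrable (fun ω => (∑ i, lam i ω) + |C - α|) μ :=
      (integrable_finset_sum _ fun i _ => hint i).add (integrable_const _)
    refine hg.mono' ?_ (Filter.Eventually.of_forall fun ω => ?_)
    · apply Measurable.aestronglyMeasurable
      apply Measurable.max _ measurable_const
      apply Measurable.sub _ measurable_const
      exact Finset.measurable_sum _ fun i _ => ((hmeas i).sub measurable_const).max measurable_const
    · have h1 : ∀ i, max (lam i ω - ρ i * α) 0 ≤ lam i ω := by
        intro i
        apply max_le _ (hnonneg i ω)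
        have : 0 ≤ ρ i * α := mul_nonneg (hρpos i).le hα
        linarith
      have h2 : ∑ i, max (lam i ω - ρ i * α) 0 ≤ ∑ i, lam i ω :=
        Finset.sum_le_sum fun i _ => h1 i
      have h3 : 0 ≤ ∑ i, lam i ω := Finset.sum_nonneg fun i _ => hnonneg i ω
      have h5 : ‖f α ω‖ = f α ω := by
        rw [Real.norm_eq_abs]
        exact abs_of_nonneg (le_max_right _ _)
      rw [h5]
      apply max_le
      · have := neg_abs_le (C - α)
        linarith
      · positivity
  -- pointwise monotonicity
  have hmono : ∀ ω, f αh ω ≤ f αk ω := by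
    intro ω
    apply max_le_max _ le_rfl
    have key : ∀ i : Fin M,
        max (lam i ω - ρ i * αh) 0 - max (lam i ω - ρ i * αk) 0 ≤ ρ i * (αk - αh) := by
      intro i
      have h0 := abs_max_sub_max_le_abs (lam i ω - ρ i * αh) (lam i ω - ρ i * αk) 0
      have habs : |(lam i ω - ρ i * αh) - (lam i ω - ρ i * αk)| = ρ i * (αk - αh) := by
        rw [show (lam i ω - ρ i * αh) - (lam i ω - ρ i * αk) = ρ i * (αk - αh) by ring]
        exact abs_of_nonneg (mul_nonneg (hρpos i).le (by linarith))
      calc max (lam i ω - ρ i * αh) 0 - max (lam i ω - ρ i * αk) 0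
          ≤ |max (lam i ω - ρ i * αh) 0 - max (lam i ω - ρ i * αk) 0| := le_abs_self _
        _ ≤ |(lam i ω - ρ i * αh) - (lam i ω - ρ i * αk)| := h0
        _ = ρ i * (αk - αh) := habs
    have hsum : ∑ i, max (lam i ω - ρ i * αh) 0 - ∑ i, max (lam i ω - ρ i * αk) 0
        ≤ αk - αh := by
      rw [← Finset.sum_sub_distrib]
      calc ∑ i, (max (lam i ω - ρ i * αh) 0 - max (lam i ω - ρ i * αk) 0)
          ≤ ∑ i, ρ i * (αk - αh) := Finset.sum_le_sum fun i _ => key i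
        _ = (∑ i, ρ i) * (αk - αh) := by rw [Finset.sum_mul]
        _ = αk - αh := by rw [hρsum, one_mul]
    linarith
  -- strict gain on A
  have hgain : ∀ ω ∈ A, f αh ω + (αk - αh) * (1 - ρ j) / 2 ≤ f αk ω := by
    intro ω hω
    have hωj : C + 1 < lam j ω := by
      have h0 := Set.mem_iInter.1 hω j
      rw [hs] at h0
      simpa using h0
    have hωi : ∀ i, i ≠ j → lam i ω < ρ i * m := by
      intro i hi
      have h0 := Set.mem_iInter.1 hω i
      rw [hs] at h0
      simpa [hi] using h0
    have hρjαk : ρ j * αk ≤ αk :=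
      by nlinarith [mul_nonneg (by linarith : (0:ℝ) ≤ 1 - ρ j) (by linarith : (0:ℝ) ≤ αk)]
    have hρjαh : ρ j * αh ≤ αh :=
      by nlinarith [mul_nonneg (by linarith : (0:ℝ) ≤ 1 - ρ j) hαh]
    have hjk : max (lam j ω - ρ j * αk) 0 = lam j ω - ρ j * αk := by
      apply max_eq_left; linarith
    have hjh : max (lam j ω - ρ j * αh) 0 = lam j ω - ρ j * αh := by
      apply max_eq_left; linarith
    have hik : ∀ i, i ≠ j → max (lam i ω - ρ i * αk) 0 = 0 := by
      intro i hi
      apply max_eq_right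
      have h1 : ρ i * m ≤ ρ i * αk := mul_le_mul_of_nonneg_left hmlt' (hρpos i).le
      have h2 := hωi i hi
      linarith
    have hih : ∀ i, i ≠ j → max (lam i ω - ρ i * αh) 0 ≤ ρ i * ((αk - αh) / 2) := by
      intro i hi
      apply max_le
      · have h2 := hωi i hi
        have h3 : ρ i * m - ρ i * αh = ρ i * ((αk - αh) / 2) := by
          rw [hm]; ring
        linarith
      · exact mul_nonneg (hρpos i).le (by linarith)
    have hsumk : ∑ i, max (lam i ω - ρ i * αk) 0 = lam j ω - ρ j * αk := by
      rw [← Finset.add_sum_erase _ _ (Finset.mem_univ j), hjk]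
      rw [Finset.sum_eq_zero fun i hi => hik i (Finset.mem_erase.1 hi).1]
      ring
    have hsumh_le : ∑ i, max (lam i ω - ρ i * αh) 0
        ≤ (lam j ω - ρ j * αh) + (1 - ρ j) * ((αk - αh) / 2) := by
      rw [← Finset.add_sum_erase _ _ (Finset.mem_univ j), hjh]
      have h1 : ∑ i ∈ Finset.univ.erase j, max (lam i ω - ρ i * αh) 0
          ≤ ∑ i ∈ Finset.univ.erase j, ρ i * ((αk - αh) / 2) :=
        Finset.sum_le_sum fun i hi => hih i (Finset.mem_erase.1 hi).1
      have h2 : ∑ i ∈ Finset.univ.erase j, ρ i * ((αk - αh) / 2)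
          = (1 - ρ j) * ((αk - αh) / 2) := by
        rw [← Finset.sum_mul, Finset.sum_erase_eq_sub (Finset.mem_univ j), hρsum]
      linarith
    have hsumh_ge : lam j ω - ρ j * αh ≤ ∑ i, max (lam i ω - ρ i * αh) 0 := by
      rw [← Finset.add_sum_erase _ _ (Finset.mem_univ j), hjh]
      have h0 : (0:ℝ) ≤ ∑ i ∈ Finset.univ.erase j, max (lam i ω - ρ i * αh) 0 :=
        Finset.sum_nonneg fun i _ => le_max_right _ _
      linarith
    have hgh_pos : 0 ≤ ∑ i, max (lam i ω - ρ i * αh) 0 - (C - αh) := by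
      linarith
    have hgk_pos : 0 ≤ ∑ i, max (lam i ω - ρ i * αk) 0 - (C - αk) := by
      rw [hsumk]; linarith
    have hfh : f αh ω = ∑ i, max (lam i ω - ρ i * αh) 0 - (C - αh) := max_eq_left hgh_pos
    have hfk : f αk ω = ∑ i, max (lam i ω - ρ i * αk) 0 - (C - αk) := max_eq_left hgk_pos
    rw [hfh, hfk, hsumk]
    nlinarith [hsumh_le]
  -- combine via integrals
  have hgain' : ∀ ω, f αh ω + A.indicator (fun _ => (αk - αh) * (1 - ρ j) / 2) ω ≤ f αk ω := by
    intro ω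
    by_cases hω : ω ∈ A
    · rw [Set.indicator_of_mem hω]
      exact hgain ω hω
    · rw [Set.indicator_of_notMem hω, add_zero]
      exact hmono ω
  have hind_int : Integrable (A.indicator (fun _ => (αk - αh) * (1 - ρ j) / 2)) μ :=
    (integrable_const _).indicator hAmeas
  have hint_le : ∫ ω, (f αh ω + A.indicator (fun _ => (αk - αh) * (1 - ρ j) / 2) ω) ∂μ
      ≤ ∫ ω, f αk ω ∂μ :=
    integral_mono ((hfint αh hαh).add hind_int) (hfint αk (le_trans hαh hlt.le)) hgain'
  rw [integral_add (hfint αh hαh) hind_int] at hint_le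
  rw [integral_indicator_const _ hAmeas] at hint_le
  have htoReal : 0 < (μ A).toReal :=
    ENNReal.toReal_pos hApos.ne' (measure_ne_top μ A)
  have hfin : ∫ ω, f αh ω ∂μ < ∫ ω, f αk ω ∂μ := by
    have hsmul : 0 < μ.real A • ((αk - αh) * (1 - ρ j) / 2) := by
      rw [smul_eq_mul]; exact mul_pos htoReal hεpos
    linarith
  rw [hL αh, hL αk]
  exact hfin
end
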